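/- arXiv:1010.4532 — 3 statements merged into one kernel-verified Lean document; each statement's English description precedes it below -/
import Mathlib

section
/- In a uniformly convex Banach space, an affine isometric action of a topological group has a global fixed point if and only if some (equivalently, every) orbit is bounded. -/
/-! A bounded orbit `S` is mapped onto itself by every group element. In a uniformly convex space,
the midpoint of two points at distance `≥ ε` that both lie within `r` of every point of `S` lies
within `r - δ` of every point of `S`; hence near-minimisers of `x ↦ sup_{s ∈ S} ‖x - s‖` are close
together, and by completeness this function has a unique minimiser, the Chebyshev center of `S`.
The group acts on `S` by isometries, so it fixes the Chebyshev center. -/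

open Bornology Metric Filter

theorem Continuous.exists_le_of_forall_dist_lt {X : Type*} [PseudoMetricSpace X] [CompleteSpace X]
    {f : X → ℝ} (hf : Continuous f) {m : ℝ} (hm : ∀ δ > 0, ∃ x, f x < m + δ)
    (hclose : ∀ ε > 0, ∃ δ > 0, ∀ x y, f x < m + δ → f y < m + δ → dist x y < ε) :
    ∃ c, f c ≤ m := by
  choose u hu using fun n : ℕ => hm (1 / (n + 1)) Nat.one_div_pos_of_nat
  have eventually_lt : ∀ δ > 0, ∀ᶠ n in atTop, f (u n) < m + δ := fun δ hδ => by
    filter_upwards [(tendsto_one_div_add_atTop_nhds_zero_nat.eventually (gt_mem_nhds hδ))]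
      with n hn using (hu n).trans (by linarith)
  have hu_cauchy : CauchySeq u := by
    refine Metric.cauchySeq_iff'.2 fun ε hε => ?_
    obtain ⟨δ, hδ, hclose⟩ := hclose ε hε
    obtain ⟨N, hN⟩ := eventually_atTop.1 (eventually_lt δ hδ)
    exact ⟨N, fun n hn => hclose _ _ (hN n hn) (hN N le_rfl)⟩
  obtain ⟨c, hc⟩ := cauchySeq_tendsto_of_complete hu_cauchy
  refine ⟨c, le_of_forall_pos_le_add fun δ hδ => ?_⟩
  exact le_of_tendsto ((hf.tendsto c).comp hc) ((eventually_lt δ hδ).mono fun n hn => hn.le)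

section UniformConvexity

variable {E : Type*} [NormedAddCommGroup E] [NormedSpace ℝ E] [UniformConvexSpace E]

/-- Unlike in `exists_forall_closed_ball_dist_add_le_two_mul_sub`, the gap `δ` does not depend on
the radius `r ≤ R`. -/
theorem exists_forall_norm_add_le_two_mul_sub_of_le {ε R : ℝ} (hε : 0 < ε) (hR : 0 < R) :
    ∃ δ > 0, ∀ r ≤ R, ∀ u v : E, ‖u‖ ≤ r → ‖v‖ ≤ r → ε ≤ ‖u - v‖ → ‖u + v‖ ≤ 2 * r - δ := by
  obtain ⟨δ, hδ, h⟩ := exists_forall_closed_ball_dist_add_le_two_sub E (div_pos hε hR)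
  refine ⟨ε * δ / 2, by positivity, fun r hrR u v hu hv huv => ?_⟩
  have hεr : ε / 2 ≤ r := by linarith [norm_sub_le u v]
  have hr : 0 < r := by linarith
  have hscale : ∀ w : E, ‖r⁻¹ • w‖ = ‖w‖ / r := fun w => by
    rw [norm_smul_of_nonneg (inv_nonneg.2 hr.le), inv_mul_eq_div]
  have hgap := h (x := r⁻¹ • u) (y := r⁻¹ • v) (by rw [hscale, div_le_one hr]; exact hu)
    (by rw [hscale, div_le_one hr]; exact hv)
    (by rw [← smul_sub, hscale]; exact div_le_div₀ (norm_nonneg _) huv hr hrR)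
  rw [← smul_add, hscale, div_le_iff₀ hr] at hgap
  linarith [mul_le_mul_of_nonneg_left hεr hδ.le]

theorem exists_forall_dist_midpoint_le_sub {ε R : ℝ} (hε : 0 < ε) (hR : 0 < R) :
    ∃ δ > 0, ∀ r ≤ R, ∀ x y z : E, dist x z ≤ r → dist y z ≤ r → ε ≤ dist x y →
      dist (midpoint ℝ x y) z ≤ r - δ := by
  obtain ⟨δ, hδ, h⟩ := exists_forall_norm_add_le_two_mul_sub_of_le (E := E) hε hR
  refine ⟨δ / 2, half_pos hδ, fun r hrR x y z hx hy hxy => ?_⟩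
  rw [dist_eq_norm] at hx hy hxy ⊢
  have hmid : midpoint ℝ x y - z = (2 : ℝ)⁻¹ • ((x - z) + (y - z)) := by
    rw [midpoint_eq_smul_add, invOf_eq_inv]
    module
  have := h r hrR (x - z) (y - z) hx hy (by rwa [sub_sub_sub_cancel_right])
  rw [hmid, norm_smul_of_nonneg (by norm_num)]
  linarith

end UniformConvexity

section ChebyshevRadius

variable {X : Type*} [PseudoMetricSpace X] {S : Set X}

/-- Junk value `0` when `S` is unbounded. -/
noncomputable def chebyshevRadiusAt (S : Set X) (x : X) : ℝ := ⨆ s : S, dist x s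

noncomputable def chebyshevRadius (S : Set X) : ℝ := ⨅ x, chebyshevRadiusAt S x

theorem chebyshevRadiusAt_nonneg (S : Set X) (x : X) : 0 ≤ chebyshevRadiusAt S x :=
  Real.iSup_nonneg fun _ => dist_nonneg

theorem chebyshevRadius_nonneg (S : Set X) : 0 ≤ chebyshevRadius S :=
  Real.iInf_nonneg fun x => chebyshevRadiusAt_nonneg S x

theorem chebyshevRadius_le_chebyshevRadiusAt (S : Set X) (x : X) :
    chebyshevRadius S ≤ chebyshevRadiusAt S x :=
  ciInf_le ⟨0, by rintro _ ⟨y, rfl⟩; exact chebyshevRadiusAt_nonneg S y⟩ x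

theorem exists_chebyshevRadiusAt_lt [Nonempty X] (S : Set X) {δ : ℝ} (hδ : 0 < δ) :
    ∃ x, chebyshevRadiusAt S x < chebyshevRadius S + δ :=
  exists_lt_of_ciInf_lt (lt_add_of_pos_right _ hδ)

theorem dist_le_chebyshevRadiusAt (hb : IsBounded S) (x : X) {s : X} (hs : s ∈ S) :
    dist x s ≤ chebyshevRadiusAt S x := by
  obtain ⟨r, hr⟩ := hb.subset_closedBall x
  refine le_ciSup (f := fun s : S => dist x s) ⟨r, ?_⟩ ⟨s, hs⟩
  rintro _ ⟨t, rfl⟩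
  exact mem_closedBall'.1 (hr t.2)

theorem chebyshevRadiusAt_le (hne : S.Nonempty) {x : X} {r : ℝ} (h : ∀ s ∈ S, dist x s ≤ r) :
    chebyshevRadiusAt S x ≤ r :=
  haveI := hne.to_subtype
  ciSup_le fun s => h s s.2

theorem chebyshevRadiusAt_le_add_dist (hne : S.Nonempty) (hb : IsBounded S) (x y : X) :
    chebyshevRadiusAt S x ≤ chebyshevRadiusAt S y + dist x y :=
  chebyshevRadiusAt_le hne fun s hs => by
    linarith [dist_triangle x y s, dist_le_chebyshevRadiusAt hb y hs]

theorem lipschitzWith_chebyshevRadiusAt (hne : S.Nonempty) (hb : IsBounded S) :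
    LipschitzWith 1 (chebyshevRadiusAt S) :=
  LipschitzWith.of_le_add (chebyshevRadiusAt_le_add_dist hne hb)

theorem chebyshevRadiusAt_apply_le_of_isometry {e : X → X} (he : Isometry e) (hS : S ⊆ e '' S)
    (hne : S.Nonempty) (hb : IsBounded S) (x : X) :
    chebyshevRadiusAt S (e x) ≤ chebyshevRadiusAt S x :=
  chebyshevRadiusAt_le hne fun s hs => by
    obtain ⟨t, ht, rfl⟩ := hS hs
    rw [he.dist_eq]
    exact dist_le_chebyshevRadiusAt hb x ht

end ChebyshevRadius

section ChebyshevCenter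

variable {E : Type*} [NormedAddCommGroup E] [NormedSpace ℝ E] [UniformConvexSpace E] {S : Set E}

theorem exists_forall_dist_lt_of_chebyshevRadiusAt_lt (hne : S.Nonempty) (hb : IsBounded S)
    {ε : ℝ} (hε : 0 < ε) :
    ∃ δ > 0, ∀ x y, chebyshevRadiusAt S x < chebyshevRadius S + δ →
      chebyshevRadiusAt S y < chebyshevRadius S + δ → dist x y < ε := by
  obtain ⟨η, hη, hmid⟩ := exists_forall_dist_midpoint_le_sub (E := E) hε
    (R := chebyshevRadius S + 1) (by linarith [chebyshevRadius_nonneg S])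
  refine ⟨min 1 η, lt_min one_pos hη, fun x y hx hy => ?_⟩
  by_contra! hxy
  set r := max (chebyshevRadiusAt S x) (chebyshevRadiusAt S y)
  have hr : r < chebyshevRadius S + min 1 η := max_lt hx hy
  have hmid_radius : chebyshevRadiusAt S (midpoint ℝ x y) ≤ r - η :=
    chebyshevRadiusAt_le hne fun s hs => hmid r (by linarith [min_le_left 1 η]) x y s
      ((dist_le_chebyshevRadiusAt hb x hs).trans (le_max_left _ _))
      ((dist_le_chebyshevRadiusAt hb y hs).trans (le_max_right _ _)) hxy
  linarith [chebyshevRadius_le_chebyshevRadiusAt S (midpoint ℝ x y), min_le_right 1 η]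

theorem eq_of_chebyshevRadiusAt_le_chebyshevRadius (hne : S.Nonempty) (hb : IsBounded S)
    {x y : E} (hx : chebyshevRadiusAt S x ≤ chebyshevRadius S)
    (hy : chebyshevRadiusAt S y ≤ chebyshevRadius S) : x = y :=
  eq_of_forall_dist_le fun ε hε => by
    obtain ⟨δ, hδ, hclose⟩ := exists_forall_dist_lt_of_chebyshevRadiusAt_lt hne hb hε
    exact (hclose x y (by linarith) (by linarith)).le

theorem exists_chebyshevRadiusAt_le_chebyshevRadius [CompleteSpace E] (hne : S.Nonempty)
    (hb : IsBounded S) : ∃ c, chebyshevRadiusAt S c ≤ chebyshevRadius S :=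
  (lipschitzWith_chebyshevRadiusAt hne hb).continuous.exists_le_of_forall_dist_lt
    (fun _ => exists_chebyshevRadiusAt_lt S)
    (fun _ => exists_forall_dist_lt_of_chebyshevRadiusAt_lt hne hb)

theorem exists_forall_isFixedPt_of_isometry [CompleteSpace E] {ι : Type*} {f : ι → E → E}
    (hf : ∀ i, Isometry (f i)) (hS : ∀ i, S ⊆ f i '' S) (hne : S.Nonempty) (hb : IsBounded S) :
    ∃ c, ∀ i, Function.IsFixedPt (f i) c := by
  obtain ⟨c, hc⟩ := exists_chebyshevRadiusAt_le_chebyshevRadius hne hb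
  exact ⟨c, fun i => eq_of_chebyshevRadiusAt_le_chebyshevRadius hne hb
    ((chebyshevRadiusAt_apply_le_of_isometry (hf i) (hS i) hne hb c).trans hc) hc⟩

end ChebyshevCenter

theorem isBounded_range_apply_of_isometry {X ι : Type*} [PseudoMetricSpace X] {f : ι → X → X}
    (hf : ∀ i, Isometry (f i)) {x : X} (hx : IsBounded (Set.range fun i => f i x)) (y : X) :
    IsBounded (Set.range fun i => f i y) :=
  hx.cthickening.subset <| by
    rintro _ ⟨i, rfl⟩
    exact mem_cthickening_of_dist_le _ _ (dist y x) _ (Set.mem_range_self i) ((hf i).dist_eq y x).le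

theorem affine_isometric_action_fixed_point_iff_bounded_orbit_general
    (G : Type) [Group G]
    (B : Type) [NormedAddCommGroup B] [NormedSpace ℝ B] [UniformConvexSpace B]
    [CompleteSpace B]
    (α : G → (B ≃ᵃⁱ[ℝ] B))
    (hmul : ∀ g h : G, α (g * h) = (α h).trans (α g)) :
    ((∃ x : B, ∀ g : G, α g x = x) ↔
        ∃ x : B, Bornology.IsBounded (Set.range fun g : G => α g x)) ∧
    ((∃ x : B, Bornology.IsBounded (Set.range fun g : G => α g x)) ↔
        ∀ x : B, Bornology.IsBounded (Set.range fun g : G => α g x)) := by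
  have orbit_invariant (x : B) (h : G) :
      Set.range (fun g => α g x) ⊆ α h '' Set.range (fun g => α g x) := by
    rintro _ ⟨g, rfl⟩
    refine ⟨α (h⁻¹ * g) x, Set.mem_range_self _, ?_⟩
    rw [← Function.comp_apply (f := α h), ← AffineIsometryEquiv.coe_trans, ← hmul,
      mul_inv_cancel_left]
  have bounded_of_fixed (x : B) (hx : ∀ g, α g x = x) :
      IsBounded (Set.range fun g => α g x) := by
    simp only [hx, Set.range_const, isBounded_singleton]
  have hα (g : G) : Isometry (α g) := (α g).isometry
  exact ⟨⟨fun ⟨x, hx⟩ => ⟨x, bounded_of_fixed x hx⟩,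
      fun ⟨x, hx⟩ => exists_forall_isFixedPt_of_isometry hα (orbit_invariant x)
        (Set.range_nonempty _) hx⟩,
    fun ⟨x, hx⟩ => isBounded_range_apply_of_isometry hα hx, fun h => ⟨0, h 0⟩⟩

/-- In a uniformly convex Banach space `B`, a continuous affine
isometric action `α` of a topological group `G` has a global fixed point if and only
if some orbit is bounded, if and only if every orbit is bounded. -/
theorem affine_isometric_action_fixed_point_iff_bounded_orbit
    (G : Type) [Group G] [TopologicalSpace G] [IsTopologicalGroup G]
    (B : Type) [NormedAddCommGroup B] [NormedSpace ℝ B] [UniformConvexSpace B]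
    [CompleteSpace B]
    (α : G → (B ≃ᵃⁱ[ℝ] B))
    (hmul : ∀ g h : G, α (g * h) = (α h).trans (α g))
    (hcont : Continuous fun q : G × B => α q.1 q.2) :
    ((∃ x : B, ∀ g : G, α g x = x) ↔
        ∃ x : B, Bornology.IsBounded (Set.range fun g : G => α g x)) ∧
    ((∃ x : B, Bornology.IsBounded (Set.range fun g : G => α g x)) ↔
        ∀ x : B, Bornology.IsBounded (Set.range fun g : G => α g x)) :=
  affine_isometric_action_fixed_point_iff_bounded_orbit_general G B α hmul
end

section
/- Let Γ be a finite index subgroup of a countable discrete group G, σ an isometric representation of Γ on a Banach space B, and b : Γ → B a quasi-σ-cocycle. Then the induced map b̃ : G → ℓ^p(G/Γ, B), defined using a set of coset representatives D and the cocycle β(g,d) ∈ Γ determined by g⁻¹dβ(g,d) ∈ D, via b̃(g)(d) = b(β(g,d)), is a quasi-cocycle for the induced representation Ind_Γ^G σ; moreover b̃ restricted to Γ is unbounded whenever b is unbounded. -/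
/-- Let `Γ` be a finite index subgroup of a countable discrete group
`G`, `σ` an isometric linear representation of `Γ` on a Banach space `B`, and
`b : Γ → B` a quasi-`σ`-cocycle.  Let `D` be a (finite) set of coset
representatives (every `g ∈ G` is uniquely `g = d·γ`), `β(g,d) ∈ Γ` determined by
`g⁻¹ d β(g,d) ∈ D`, and `g·d` the representative of `g d Γ`.  Then the induced map
`b̃ : G → ℓ^p(G/Γ, B) = ℓ^p(D, B)`, `b̃(g)(d) = b(β(g,d))`, is a quasi-cocycle for
the induced representation `(ρ(g)ξ)(d) = σ(β(g,d)) ξ(g⁻¹·d)`; moreover the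
restriction of `b̃` to `Γ` is unbounded whenever `b` is unbounded. -/
theorem induced_quasicocycle_finite_index
    (G : Type) [Group G] [Countable G]
    (Γ : Subgroup G) [Γ.FiniteIndex]
    (D : Set G) [Fintype D]
    (huniq : ∀ g : G, ∃! q : D × Γ, g = (q.1 : G) * (q.2 : G))
    (β : G → D → Γ) (hβ : ∀ (g : G) (d : D), g⁻¹ * (d : G) * (β g d : G) ∈ D)
    (act : G → D → D)
    (hact : ∀ (g : G) (d : D), ∃ γ : Γ, (act g d : G) = g * (d : G) * (γ : G))
    (B : Type) [NormedAddCommGroup B] [NormedSpace ℝ B] [CompleteSpace B]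
    (σ : Γ →* (B ≃ₗᵢ[ℝ] B))
    (b : Γ → B)
    (hqc : ∃ C : ℝ, ∀ γ η : Γ, ‖b (γ * η) - b γ - σ γ (b η)‖ ≤ C)
    (p : ℝ) (hp : 1 < p) [Fact (1 ≤ ENNReal.ofReal p)]
    (bt : G → PiLp (ENNReal.ofReal p) (fun _ : D => B))
    (hbt : ∀ (g : G) (d : D), bt g d = b (β g d))
    (R : G → PiLp (ENNReal.ofReal p) (fun _ : D => B) →
            PiLp (ENNReal.ofReal p) (fun _ : D => B))
    (hR : ∀ (g : G) (ξ : PiLp (ENNReal.ofReal p) (fun _ : D => B)) (d : D),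
      R g ξ d = σ (β g d) (ξ (act g⁻¹ d))) :
    (∃ C : ℝ, ∀ g h : G, ‖bt (g * h) - bt g - R g (bt h)‖ ≤ C) ∧
    (¬ Bornology.IsBounded (Set.range b) →
      ¬ Bornology.IsBounded (Set.range fun γ : Γ => bt (γ : G))) := by
  classical
  obtain ⟨C, hC⟩ := hqc
  have hp0 : (0:ℝ) < p := lt_trans zero_lt_one hp
  have htr : (ENNReal.ofReal p).toReal = p := ENNReal.toReal_ofReal hp0.le
  have huniq' : ∀ (x : G) (d₁ d₂ : D) (γ₁ γ₂ : Γ),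
      x = (d₁:G) * γ₁ → x = (d₂:G) * γ₂ → d₁ = d₂ ∧ γ₁ = γ₂ := by
    intro x d₁ d₂ γ₁ γ₂ h₁ h₂
    obtain ⟨q, hq, hqu⟩ := huniq x
    have e₁ := hqu (d₁, γ₁) h₁
    have e₂ := hqu (d₂, γ₂) h₂
    have e := e₁.trans e₂.symm
    exact ⟨congrArg Prod.fst e, congrArg Prod.snd e⟩
  have hβu : ∀ (g : G) (d : D) (γ : Γ), g⁻¹ * (d:G) * (γ:G) ∈ D → β g d = γ := by
    intro g d γ hγ
    have h₁ : g⁻¹ * (d:G) =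
        ((⟨_, hβ g d⟩ : D) : G) * (((β g d)⁻¹ : Γ) : G) := by
      push_cast; group
    have h₂ : g⁻¹ * (d:G) = ((⟨_, hγ⟩ : D) : G) * ((γ⁻¹ : Γ) : G) := by
      push_cast; group
    have := (huniq' _ _ _ _ _ h₁ h₂).2
    exact inv_injective this
  -- the representative map in terms of β
  have hactβ : ∀ (g : G) (d : D), ((act g d : D) : G) = g * (d:G) * (β g⁻¹ d : G) := by
    intro g d
    obtain ⟨γ, hγ⟩ := hact g d
    have hmem : (g⁻¹)⁻¹ * (d:G) * (γ:G) ∈ D := by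
      rw [inv_inv, ← hγ]; exact (act g d).2
    rw [hγ, hβu g⁻¹ d γ hmem]
  -- the cocycle identity
  have hcoc : ∀ (g h : G) (d : D),
      β (g * h) d = β g d * β h (act g⁻¹ d) := by
    intro g h d
    apply hβu
    have key := hβ h (act g⁻¹ d)
    have heq : (g*h)⁻¹ * (d:G) * ((β g d * β h (act g⁻¹ d) : Γ) : G)
        = h⁻¹ * ((act g⁻¹ d : D) : G) * ((β h (act g⁻¹ d) : Γ) : G) := by
      rw [hactβ g⁻¹ d, inv_inv]
      push_cast; group
    rw [heq]; exact key
  -- pointwise bound on coordinates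
  have hpt : ∀ (g h : G) (d : D),
      ‖(bt (g * h) - bt g - R g (bt h)) d‖ ≤ max C 0 := by
    intro g h d
    have hsub : (bt (g * h) - bt g - R g (bt h)) d
        = bt (g * h) d - bt g d - R g (bt h) d := rfl
    rw [hsub, hbt, hbt, hR, hbt, hcoc]
    exact le_trans (hC _ _) (le_max_left _ _)
  have hnorm_le : ∀ (x : PiLp (ENNReal.ofReal p) (fun _ : D => B)) (M : ℝ),
      0 ≤ M → (∀ d : D, ‖x d‖ ≤ M) →
      ‖x‖ ≤ ((Fintype.card D : ℝ) * M ^ p) ^ (1/p) := by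
    intro x M hM hx
    rw [PiLp.norm_eq_sum (by rw [htr]; exact hp0), htr]
    apply Real.rpow_le_rpow
    · exact Finset.sum_nonneg fun i _ => Real.rpow_nonneg (norm_nonneg _) _
    · calc ∑ i : D, ‖x i‖ ^ p ≤ ∑ _i : D, M ^ p :=
            Finset.sum_le_sum fun i _ =>
              Real.rpow_le_rpow (norm_nonneg _) (hx i) hp0.le
        _ = (Fintype.card D : ℝ) * M ^ p := by
            rw [Finset.sum_const, nsmul_eq_mul, Finset.card_univ]
    · positivity
  have hcoord : ∀ (x : PiLp (ENNReal.ofReal p) (fun _ : D => B)) (d : D),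
      ‖x d‖ ≤ ‖x‖ := by
    intro x d
    rw [PiLp.norm_eq_sum (by rw [htr]; exact hp0), htr]
    have h1 : ‖x d‖ = (‖x d‖ ^ p) ^ (1/p) := by
      rw [← Real.rpow_mul (norm_nonneg _), mul_one_div, div_self hp0.ne',
        Real.rpow_one]
    rw [h1]
    apply Real.rpow_le_rpow (Real.rpow_nonneg (norm_nonneg _) _) _ (by positivity)
    exact Finset.single_le_sum (fun i _ => Real.rpow_nonneg (norm_nonneg _) _)
      (Finset.mem_univ d)
  constructor
  · refine ⟨((Fintype.card D : ℝ) * (max C 0) ^ p) ^ (1/p), fun g h => ?_⟩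
    exact hnorm_le _ _ (le_max_right _ _) (hpt g h)
  · intro hub hbd
    apply hub
    rw [isBounded_iff_forall_norm_le] at hbd ⊢
    obtain ⟨r, hr⟩ := hbd
    obtain ⟨⟨d₀, γ₀⟩, h1, _⟩ := huniq 1
    have hd₀ : (d₀ : G) = (γ₀ : G)⁻¹ := by
      rw [eq_inv_iff_mul_eq_one]; exact h1.symm
    refine ⟨r, ?_⟩
    rintro x ⟨γ, rfl⟩
    have hβ' : β ((γ₀⁻¹ * γ * γ₀ : Γ) : G) d₀ = γ := by
      apply hβu
      have : (((γ₀⁻¹ * γ * γ₀ : Γ) : G))⁻¹ * (d₀:G) * (γ:G) = (d₀:G) := by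
        rw [hd₀]; push_cast; group
      rw [this]; exact d₀.2
    have hbb : b γ = bt ((γ₀⁻¹ * γ * γ₀ : Γ) : G) d₀ := by rw [hbt, hβ']
    rw [hbb]
    exact le_trans (hcoord _ _) (hr _ ⟨γ₀⁻¹ * γ * γ₀, rfl⟩)
end

section
/- If a topological group Λ has property (T_B) for a Banach space B (i.e., for every isometric linear representation ρ on B, the restriction of ρ to the canonical complement B'_{ρ(Λ)} of the invariant vectors does not have almost invariant vectors), then every ρ-cocycle with values in B'_{ρ(Λ)} that is a limit of coboundaries in the topology of uniform convergence on compact sets is itself a coboundary — equivalently, the space of coboundaries is closed in the space of cocycles into the complement of invariant vectors. -/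
/-!
Property (T_B) yields a compact set `K` and `ε > 0` such that no unit vector of the complement
`B'_{ρ(Λ)}` is moved by less than `ε` by all of `K`. By scaling, `ε ‖ξ‖ ≤ sup_{g ∈ K} ‖ξ - ρ g ξ‖`
on the complement, so the coboundary map is bounded below there. Hence vectors whose
coboundaries approximate `b` on `K` ever better form a Cauchy sequence; its limit `ξ` satisfies
`b = ξ - ρ ξ`, because vectors approximating `b` on a larger compact set `K ∪ {g}` converge to
the same `ξ`.
-/

open Filter Topology

section SpectralGap

variable {Λ B : Type*} [Group Λ] [NormedAddCommGroup B] [NormedSpace ℝ B]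

/-- The canonical complement `B'_{ρ(Λ)}` of the invariant vectors: the common kernel of the
`ρ`-invariant continuous functionals. -/
def invariantAnnihilator (ρ : Λ →* (B ≃ₗᵢ[ℝ] B)) : Submodule ℝ B where
  carrier := {ξ | ∀ φ : B →L[ℝ] ℝ, (∀ (g : Λ) (y : B), φ (ρ g y) = φ y) → φ ξ = 0}
  add_mem' hξ hη φ hφ := by rw [map_add, hξ φ hφ, hη φ hφ, add_zero]
  zero_mem' φ _ := map_zero φ
  smul_mem' c _ hξ φ hφ := by rw [map_smul, hξ φ hφ, smul_zero]

def HasSpectralGapOn (ρ : Λ →* (B ≃ₗᵢ[ℝ] B)) (V : Submodule ℝ B) (K : Set Λ) (ε : ℝ) : Prop :=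
  ∀ ξ ∈ V, ‖ξ‖ = 1 → ∃ g ∈ K, ε < ‖ξ - ρ g ξ‖

variable {ρ : Λ →* (B ≃ₗᵢ[ℝ] B)} {V : Submodule ℝ B} {K : Set Λ} {ε : ℝ}

theorem HasSpectralGapOn.mul_norm_le (hgap : HasSpectralGapOn ρ V K ε) {ξ : B} (hξ : ξ ∈ V)
    {M : ℝ} (hM : 0 ≤ M) (hbound : ∀ g ∈ K, ‖ξ - ρ g ξ‖ ≤ M) : ε * ‖ξ‖ ≤ M := by
  rcases eq_or_ne ξ 0 with rfl | hne
  · simpa using hM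
  have hunit : ‖‖ξ‖⁻¹ • ξ‖ = 1 := norm_smul_inv_norm hne
  obtain ⟨g, hg, hlt⟩ := hgap _ (V.smul_mem _ hξ) hunit
  rw [map_smul, ← smul_sub, norm_smul, norm_inv, norm_norm,
    lt_inv_mul_iff₀ (norm_pos_iff.mpr hne)] at hlt
  exact (mul_comm ε _).trans_le (hlt.le.trans (hbound g hg))

theorem HasSpectralGapOn.mul_norm_sub_le (hgap : HasSpectralGapOn ρ V K ε) {b : Λ → B}
    {ξ η : B} (hξ : ξ ∈ V) (hη : η ∈ V) {δ δ' : ℝ} (hδ : 0 ≤ δ) (hδ' : 0 ≤ δ')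
    (hbξ : ∀ g ∈ K, ‖b g - (ξ - ρ g ξ)‖ ≤ δ) (hbη : ∀ g ∈ K, ‖b g - (η - ρ g η)‖ ≤ δ') :
    ε * ‖ξ - η‖ ≤ δ + δ' := by
  refine hgap.mul_norm_le (V.sub_mem hξ hη) (add_nonneg hδ hδ') fun g hg => ?_
  have hsplit : (ξ - η) - ρ g (ξ - η) = (b g - (η - ρ g η)) - (b g - (ξ - ρ g ξ)) := by
    rw [map_sub]; abel
  rw [hsplit, add_comm]
  exact (norm_sub_le _ _).trans (add_le_add (hbη g hg) (hbξ g hg))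

theorem HasSpectralGapOn.tendsto_norm_sub (hgap : HasSpectralGapOn ρ V K ε) (hε : 0 < ε)
    {b : Λ → B} {ι : Type*} {l : Filter ι} {x y : ι → B} {e e' : ι → ℝ}
    (hx : ∀ i, x i ∈ V) (hy : ∀ i, y i ∈ V) (he₀ : ∀ i, 0 ≤ e i) (he'₀ : ∀ i, 0 ≤ e' i)
    (he : Tendsto e l (𝓝 0)) (he' : Tendsto e' l (𝓝 0))
    (hbx : ∀ i, ∀ g ∈ K, ‖b g - (x i - ρ g (x i))‖ ≤ e i)
    (hby : ∀ i, ∀ g ∈ K, ‖b g - (y i - ρ g (y i))‖ ≤ e' i) :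
    Tendsto (fun i => ‖x i - y i‖) l (𝓝 0) := by
  refine squeeze_zero (fun _ => norm_nonneg _) (fun i => ?_)
    (by simpa using (he.add he').div_const ε)
  rw [le_div_iff₀ hε, mul_comm]
  exact hgap.mul_norm_sub_le (hx i) (hy i) (he₀ i) (he'₀ i) (hbx i) (hby i)

theorem HasSpectralGapOn.cauchySeq (hgap : HasSpectralGapOn ρ V K ε) (hε : 0 < ε)
    {b : Λ → B} {x : ℕ → B} {e : ℕ → ℝ} (hx : ∀ n, x n ∈ V) (he₀ : ∀ n, 0 ≤ e n)
    (he : Tendsto e atTop (𝓝 0)) (hbx : ∀ n, ∀ g ∈ K, ‖b g - (x n - ρ g (x n))‖ ≤ e n) :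
    CauchySeq x := by
  rw [cauchySeq_iff_tendsto_dist_atTop_0, ← prod_atTop_atTop_eq]
  simpa only [dist_eq_norm] using hgap.tendsto_norm_sub hε (fun p : ℕ × ℕ => hx p.1)
    (fun p : ℕ × ℕ => hx p.2) (fun p => he₀ p.1) (fun p => he₀ p.2) (he.comp tendsto_fst)
    (he.comp tendsto_snd) (fun p => hbx p.1) (fun p => hbx p.2)

end SpectralGap

theorem TB_implies_coboundaries_closed_general
    (Λ : Type) [Group Λ] [TopologicalSpace Λ]
    (B : Type) [NormedAddCommGroup B] [NormedSpace ℝ B] [CompleteSpace B]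
    (hTB : ∀ ρ : Λ →* (B ≃ₗᵢ[ℝ] B), Continuous (fun q : Λ × B => ρ q.1 q.2) →
      ¬ (∀ K : Set Λ, IsCompact K → ∀ ε > (0 : ℝ), ∃ ξ : B, ‖ξ‖ = 1 ∧
          (∀ φ : B →L[ℝ] ℝ, (∀ (g : Λ) (y : B), φ (ρ g y) = φ y) → φ ξ = 0) ∧
          ∀ g ∈ K, ‖ξ - ρ g ξ‖ ≤ ε)) :
    ∀ ρ : Λ →* (B ≃ₗᵢ[ℝ] B), Continuous (fun q : Λ × B => ρ q.1 q.2) →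
    ∀ b : Λ → B, Continuous b →
    (∀ g h : Λ, b (g * h) = b g + ρ g (b h)) →
    (∀ g : Λ, ∀ φ : B →L[ℝ] ℝ,
      (∀ (g' : Λ) (y : B), φ (ρ g' y) = φ y) → φ (b g) = 0) →
    (∀ K : Set Λ, IsCompact K → ∀ ε > (0 : ℝ), ∃ ξ : B,
      (∀ φ : B →L[ℝ] ℝ, (∀ (g' : Λ) (y : B), φ (ρ g' y) = φ y) → φ ξ = 0) ∧
      ∀ g ∈ K, ‖b g - (ξ - ρ g ξ)‖ ≤ ε) →
    ∃ ξ : B, ∀ g : Λ, b g = ξ - ρ g ξ := by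
  intro ρ hρ b _ _ _ hclos
  have hT := hTB ρ hρ
  push Not at hT
  obtain ⟨K, hK, ε, hε, hnot⟩ := hT
  have hgap : HasSpectralGapOn ρ (invariantAnnihilator ρ) K ε := fun ξ hξ h1 => hnot ξ h1 hξ
  have happrox (L : Set Λ) (hL : IsCompact L) : ∃ x : ℕ → B, (∀ n, x n ∈ invariantAnnihilator ρ) ∧
      ∀ n, ∀ g ∈ L, ‖b g - (x n - ρ g (x n))‖ ≤ 1 / (n + 1) := by
    choose x hxV hbx using fun n : ℕ => hclos L hL (1 / (n + 1)) Nat.one_div_pos_of_nat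
    exact ⟨x, hxV, hbx⟩
  have he₀ (n : ℕ) : (0 : ℝ) ≤ 1 / (n + 1) := Nat.one_div_pos_of_nat.le
  have he : Tendsto (fun n : ℕ => (1 : ℝ) / (n + 1)) atTop (𝓝 0) :=
    tendsto_one_div_add_atTop_nhds_zero_nat
  obtain ⟨x, hxV, hbx⟩ := happrox K hK
  obtain ⟨ξ, hxξ⟩ := cauchySeq_tendsto_of_complete
    (hgap.cauchySeq hε hxV he₀ he hbx)
  refine ⟨ξ, fun g => ?_⟩
  obtain ⟨y, hyV, hby⟩ := happrox (K ∪ {g}) (hK.union isCompact_singleton)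
  have hyξ : Tendsto y atTop (𝓝 ξ) := by
    have hxy := hgap.tendsto_norm_sub hε hxV hyV he₀ he₀ he he hbx
      (fun n g hg => hby n g (Or.inl hg))
    simpa using hxξ.sub (tendsto_zero_iff_norm_tendsto_zero.mpr hxy)
  have hyb : Tendsto (fun n => y n - ρ g (y n)) atTop (𝓝 (b g)) := by
    refine tendsto_iff_norm_sub_tendsto_zero.mpr
      (squeeze_zero (fun _ => norm_nonneg _) (fun n => ?_) he)
    exact norm_sub_rev (b g) _ ▸ hby n g (Or.inr rfl)
  exact tendsto_nhds_unique hyb (hyξ.sub ((ρ g).continuous.tendsto ξ |>.comp hyξ))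

/-- Let `Λ` be a topological group and `B` a superreflexive Banach
space (normalized to be uniformly convex and uniformly smooth).  Suppose `Λ` has
property `(T_B)`: for every continuous isometric linear representation `ρ` on `B`,
the restriction of `ρ` to the canonical complement `B'_{ρ(Λ)}` (the annihilator of
the invariant functionals of the contragredient representation) does not have almost
invariant vectors.  Then for every such `ρ`, every continuous `ρ`-cocycle `b` with
values in `B'_{ρ(Λ)}` which lies in the closure of the coboundaries in the topology
of uniform convergence on compact sets is itself a coboundary. -/
theorem TB_implies_coboundaries_closed
    (Λ : Type) [Group Λ] [TopologicalSpace Λ] [IsTopologicalGroup Λ]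
    (B : Type) [NormedAddCommGroup B] [NormedSpace ℝ B] [CompleteSpace B]
    [UniformConvexSpace B]
    (hsmooth : ∀ ε > (0 : ℝ), ∃ δ > (0 : ℝ), ∀ x y : B, ‖x‖ = 1 → ‖y‖ ≤ δ →
      ‖x + y‖ + ‖x - y‖ ≤ 2 + ε * ‖y‖)
    (hTB : ∀ ρ : Λ →* (B ≃ₗᵢ[ℝ] B), Continuous (fun q : Λ × B => ρ q.1 q.2) →
      ¬ (∀ K : Set Λ, IsCompact K → ∀ ε > (0 : ℝ), ∃ ξ : B, ‖ξ‖ = 1 ∧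
          (∀ φ : B →L[ℝ] ℝ, (∀ (g : Λ) (y : B), φ (ρ g y) = φ y) → φ ξ = 0) ∧
          ∀ g ∈ K, ‖ξ - ρ g ξ‖ ≤ ε)) :
    ∀ ρ : Λ →* (B ≃ₗᵢ[ℝ] B), Continuous (fun q : Λ × B => ρ q.1 q.2) →
    ∀ b : Λ → B, Continuous b →
    (∀ g h : Λ, b (g * h) = b g + ρ g (b h)) →
    (∀ g : Λ, ∀ φ : B →L[ℝ] ℝ,
      (∀ (g' : Λ) (y : B), φ (ρ g' y) = φ y) → φ (b g) = 0) →
    (∀ K : Set Λ, IsCompact K → ∀ ε > (0 : ℝ), ∃ ξ : B,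
      (∀ φ : B →L[ℝ] ℝ, (∀ (g' : Λ) (y : B), φ (ρ g' y) = φ y) → φ ξ = 0) ∧
      ∀ g ∈ K, ‖b g - (ξ - ρ g ξ)‖ ≤ ε) →
    ∃ ξ : B, ∀ g : Λ, b g = ξ - ρ g ξ :=
  TB_implies_coboundaries_closed_general Λ B hTB
end
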